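/- Suppose there is an R-homomorphism φ: I → R with iφ(j) = ij = φ(i)j for all i,j ∈ I. Then an ideal K ⊆ E(R,I) is prime (respectively maximal) if and only if either (1) K = A ⊕ I for some prime (respectively maximal) ideal A of R, or (2) K = {(a,-i) : i ∈ I, a ∈ R, a - φ(i) ∈ Z} for some prime (respectively maximal) ideal Z of R with φ(I) ⊄ Z. -/

import Mathlib

open MulOpposite

/-- The underlying type of the Dorroh (ideal) extension `E(R,I)`. -/
@[ext]
structure Dorroh (R : Type*) (I : Type*) where
  fst : R
  snd : I

/-- `I` is an `R`-rng: a nonunital ring with a compatible `(R,R)`-bimodule structure. -/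
class IsRRng (R I : Type*) [Ring R] [NonUnitalRing I] [Module R I] [Module Rᵐᵒᵖ I] : Prop where
  smul_op_smul : ∀ (r : R) (s : Rᵐᵒᵖ) (x : I), r • s • x = s • r • x
  smul_mul : ∀ (r : R) (x y : I), r • (x * y) = (r • x) * y
  mul_smul_eq : ∀ (r : R) (x y : I), x * (r • y) = (op r • x) * y
  op_smul_mul : ∀ (r : R) (x y : I), op r • (x * y) = x * (op r • y)

namespace Dorroh

variable {R I : Type*} [Ring R] [NonUnitalRing I] [Module R I] [Module Rᵐᵒᵖ I] [IsRRng R I]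

instance : Add (Dorroh R I) := ⟨fun p q => ⟨p.fst + q.fst, p.snd + q.snd⟩⟩
instance : Zero (Dorroh R I) := ⟨⟨0, 0⟩⟩
instance : Neg (Dorroh R I) := ⟨fun p => ⟨-p.fst, -p.snd⟩⟩
instance : Mul (Dorroh R I) :=
  ⟨fun p q => ⟨p.fst * q.fst, op q.fst • p.snd + p.fst • q.snd + p.snd * q.snd⟩⟩
instance : One (Dorroh R I) := ⟨⟨1, 0⟩⟩

set_option linter.unusedSectionVars false

@[simp] theorem add_fst (p q : Dorroh R I) : (p + q).fst = p.fst + q.fst := rfl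
@[simp] theorem add_snd (p q : Dorroh R I) : (p + q).snd = p.snd + q.snd := rfl
@[simp] theorem zero_fst : (0 : Dorroh R I).fst = 0 := rfl
@[simp] theorem zero_snd : (0 : Dorroh R I).snd = 0 := rfl
@[simp] theorem neg_fst (p : Dorroh R I) : (-p).fst = -p.fst := rfl
@[simp] theorem neg_snd (p : Dorroh R I) : (-p).snd = -p.snd := rfl
@[simp] theorem mul_fst (p q : Dorroh R I) : (p * q).fst = p.fst * q.fst := rfl
@[simp] theorem mul_snd (p q : Dorroh R I) :
    (p * q).snd = op q.fst • p.snd + p.fst • q.snd + p.snd * q.snd := rfl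
@[simp] theorem one_fst : (1 : Dorroh R I).fst = 1 := rfl
@[simp] theorem one_snd : (1 : Dorroh R I).snd = 0 := rfl

instance : Ring (Dorroh R I) where
  add_assoc a b c := by ext <;> simp [add_assoc]
  zero_add a := by ext <;> simp
  add_zero a := by ext <;> simp
  add_comm a b := by ext <;> simp [add_comm]
  neg_add_cancel a := by ext <;> simp
  mul_assoc a b c := by
    ext
    · simp [mul_assoc]
    · simp only [mul_snd, mul_fst, smul_add, mul_smul, op_mul, mul_add, add_mul,
        IsRRng.smul_mul, IsRRng.op_smul_mul, IsRRng.smul_op_smul, mul_assoc]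
      rw [← IsRRng.mul_smul_eq]
      abel
  one_mul a := by ext <;> simp
  mul_one a := by ext <;> simp
  left_distrib a b c := by
    ext
    · simp [mul_add]
    · simp [op_add, add_smul, smul_add, mul_add]
      abel
  right_distrib a b c := by
    ext
    · simp [add_mul]
    · simp [op_add, add_smul, smul_add, add_mul]
      abel
  zero_mul a := by ext <;> simp
  mul_zero a := by ext <;> simp
  nsmul := nsmulRec
  zsmul := zsmulRec

theorem mul_def (p q : Dorroh R I) :
    p * q = ⟨p.fst * q.fst, op q.fst • p.snd + p.fst • q.snd + p.snd * q.snd⟩ := rfl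

theorem one_def : (1 : Dorroh R I) = ⟨1, 0⟩ := rfl

theorem add_def (p q : Dorroh R I) : p + q = ⟨p.fst + q.fst, p.snd + q.snd⟩ := rfl

end Dorroh

/-- An `R`-subrng of the `R`-rng `I`: an `(R,R)`-subbimodule closed under multiplication. -/
def IsRSubrng (R : Type*) {I : Type*} [Ring R] [NonUnitalRing I] [Module R I]
    [Module Rᵐᵒᵖ I] (J : Set I) : Prop :=
  (0 : I) ∈ J ∧ (∀ x ∈ J, ∀ y ∈ J, x + y ∈ J) ∧ (∀ x ∈ J, -x ∈ J) ∧
    (∀ x ∈ J, ∀ y ∈ J, x * y ∈ J) ∧ (∀ (r : R), ∀ x ∈ J, r • x ∈ J) ∧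
    (∀ (r : R), ∀ x ∈ J, op r • x ∈ J)

/-- An `R`-ideal of the `R`-rng `I`: an `(R,R)`-subbimodule that is an ideal of `I`. -/
def IsRIdeal (R : Type*) {I : Type*} [Ring R] [NonUnitalRing I] [Module R I]
    [Module Rᵐᵒᵖ I] (J : Set I) : Prop :=
  IsRSubrng R J ∧ ∀ (i : I), ∀ j ∈ J, i * j ∈ J ∧ j * i ∈ J

/-- The annihilator `ann_R(I) = {r : R | rI = Ir = 0}`. -/
def annR (R I : Type*) [Ring R] [NonUnitalRing I] [Module R I] [Module Rᵐᵒᵖ I] : Set R :=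
  {r : R | ∀ x : I, r • x = 0 ∧ op r • x = 0}

/-- An element `x` of a rng is left quasi-regular if `x + k + kx = 0` for some `k`. -/
def IsLQR {I : Type*} [NonUnitalRing I] (x : I) : Prop := ∃ k : I, x + k + k * x = 0

/-- The Jacobson radical of a rng. -/
def rngRad (I : Type*) [NonUnitalRing I] : Set I := {x : I | ∀ j : I, IsLQR (j * x)}

/-- `npowNZ x n = x ^ (n+1)` in a nonunital ring. -/
def npowNZ {I : Type*} [NonUnitalRing I] (x : I) : ℕ → I
  | 0 => x
  | n + 1 => npowNZ x n * x

/-- An element of a rng is nilpotent if some positive power of it is zero. -/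
def IsNilElem {I : Type*} [NonUnitalRing I] (x : I) : Prop := ∃ n : ℕ, npowNZ x n = 0

/-- A subset of a rng is nil if each of its elements is nilpotent. -/
def SetIsNil {I : Type*} [NonUnitalRing I] (S : Set I) : Prop := ∀ x ∈ S, IsNilElem x

/-- A subset of a rng is nilpotent if for some `n` every product of `n+1` of its
elements vanishes. -/
def SetIsNilpotent {I : Type*} [NonUnitalRing I] (S : Set I) : Prop :=
  ∃ n : ℕ, ∀ (x : I) (l : List I), x ∈ S → (∀ y ∈ l, y ∈ S) → l.length = n →
    l.foldl (· * ·) x = 0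

/-- The upper nil radical of a rng: the sum of all of its nil (two-sided) ideals. -/
def upperNil (I : Type*) [NonUnitalRing I] : Set I :=
  ((sSup {J : TwoSidedIdeal I | ∀ x ∈ J, IsNilElem x} : TwoSidedIdeal I) : Set I)

/-- A rng is semiprime if it has no nonzero ideal of square zero. -/
def IsSemiprimeRng (I : Type*) [NonUnitalRing I] : Prop :=
  ∀ J : TwoSidedIdeal I, (∀ x ∈ J, ∀ y ∈ J, x * y = 0) → J = ⊥

/-- A rng is prime if the product of any two nonzero ideals is nonzero. -/
def IsPrimeRng (I : Type*) [NonUnitalRing I] : Prop :=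
  ∀ J K : TwoSidedIdeal I, (∀ x ∈ J, ∀ y ∈ K, x * y = 0) → J = ⊥ ∨ K = ⊥

/-- `ψ : I → R` restricts to an `R`-homomorphism on the subset `J ⊆ I`. -/
def IsRHomOn (R : Type*) {I : Type*} [Ring R] [NonUnitalRing I] [Module R I]
    [Module Rᵐᵒᵖ I] (J : Set I) (ψ : I → R) : Prop :=
  (∀ x ∈ J, ∀ y ∈ J, ψ (x + y) = ψ x + ψ y) ∧
    (∀ x ∈ J, ∀ y ∈ J, ψ (x * y) = ψ x * ψ y) ∧
    (∀ (r : R), ∀ x ∈ J, ψ (r • x) = r * ψ x) ∧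
    (∀ (r : R), ∀ x ∈ J, ψ (op r • x) = ψ x * r)

/-- `φ : I → R` is an `R`-homomorphism. -/
def IsRHom (R : Type*) {I : Type*} [Ring R] [NonUnitalRing I] [Module R I]
    [Module Rᵐᵒᵖ I] (φ : I → R) : Prop :=
  (∀ x y : I, φ (x + y) = φ x + φ y) ∧ (∀ x y : I, φ (x * y) = φ x * φ y) ∧
    (∀ (r : R) (x : I), φ (r • x) = r * φ x) ∧ (∀ (r : R) (x : I), φ (op r • x) = φ x * r)

/-- A two-sided ideal `P` of a ring is prime if `AB ⊆ P` implies `A ⊆ P` or `B ⊆ P`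
for all two-sided ideals `A`, `B`. -/
def TsiPrime {S : Type*} [Ring S] (P : TwoSidedIdeal S) : Prop :=
  ∀ A B : TwoSidedIdeal S, (∀ a ∈ A, ∀ b ∈ B, a * b ∈ P) → A ≤ P ∨ B ≤ P

/-- A two-sided ideal is maximal if it is a maximal proper ideal. -/
def TsiMaximal {S : Type*} [Ring S] (P : TwoSidedIdeal S) : Prop :=
  P ≠ ⊤ ∧ ∀ Q : TwoSidedIdeal S, P ≤ Q → Q = P ∨ Q = ⊤

/-- A two-sided-ideal subset of a ring. -/
def IsTwoSidedIdealSet (R : Type*) [Ring R] (P : Set R) : Prop :=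
  (0 : R) ∈ P ∧ (∀ x ∈ P, ∀ y ∈ P, x + y ∈ P) ∧ (∀ x ∈ P, -x ∈ P) ∧
    (∀ (r : R), ∀ x ∈ P, r * x ∈ P ∧ x * r ∈ P)

/-- A subset `P` of `R` is a prime ideal if it is a two-sided ideal and `AB ⊆ P`
implies `A ⊆ P` or `B ⊆ P` for all two-sided ideals `A, B`. -/
def IsPrimeIdealSet (R : Type*) [Ring R] (P : Set R) : Prop :=
  IsTwoSidedIdealSet R P ∧ ∀ A B : TwoSidedIdeal R,
    (∀ a ∈ A, ∀ b ∈ B, a * b ∈ P) → ((A : Set R) ⊆ P ∨ (B : Set R) ⊆ P)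

/-- A subset `P` of `R` is a semiprime ideal if it is a two-sided ideal and `A² ⊆ P`
implies `A ⊆ P` for all two-sided ideals `A`. -/
def IsSemiprimeIdealSet (R : Type*) [Ring R] (P : Set R) : Prop :=
  IsTwoSidedIdealSet R P ∧ ∀ A : TwoSidedIdeal R,
    (∀ a ∈ A, ∀ b ∈ A, a * b ∈ P) → (A : Set R) ⊆ P

section IdealData

variable (R I : Type*) [Ring R] [NonUnitalRing I] [Module R I] [Module Rᵐᵒᵖ I] [IsRRng R I]

/-- The data describing an ideal of `E(R,I)`: ideals `Z ⊆ A` of `R`, an `R`-subrng `J ⊆ I`,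
and a surjective `R`-homomorphism `φ : J → A/Z` (represented by a set-map `ψ : I → R`
choosing representatives), satisfying conditions (a) `ai - ji ∈ ker φ` and
(b) `ia - ij ∈ ker φ` for all `(a,-j) ∈ K`, `i ∈ I`. -/
def DorrohIdealData (A Z : TwoSidedIdeal R) (J : Set I) (ψ : I → R) : Prop :=
  Z ≤ A ∧ IsRSubrng R J ∧
    (∀ x ∈ J, ∀ y ∈ J, ψ (x + y) - (ψ x + ψ y) ∈ Z) ∧
    (∀ x ∈ J, ∀ y ∈ J, ψ (x * y) - ψ x * ψ y ∈ Z) ∧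
    (∀ (r : R), ∀ x ∈ J, ψ (r • x) - r * ψ x ∈ Z) ∧
    (∀ (r : R), ∀ x ∈ J, ψ (op r • x) - ψ x * r ∈ Z) ∧
    (∀ j ∈ J, ψ j ∈ A) ∧
    (∀ a ∈ A, ∃ j ∈ J, a - ψ j ∈ Z) ∧
    (∀ (a : R), ∀ j ∈ J, a ∈ A → a - ψ j ∈ Z → ∀ i : I,
      (a • i - j * i ∈ J ∧ ψ (a • i - j * i) ∈ Z) ∧
      (op a • i - i * j ∈ J ∧ ψ (op a • i - i * j) ∈ Z))

/-- The subset `K = {(a, -j) : a ∈ A, j ∈ J, a + Z = φ(j)}` of `E(R,I)`. -/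
def DorrohIdealSet (A Z : TwoSidedIdeal R) (J : Set I) (ψ : I → R) : Set (Dorroh R I) :=
  {p : Dorroh R I | p.fst ∈ A ∧ -p.snd ∈ J ∧ p.fst - ψ (-p.snd) ∈ Z}

end IdealData

/-!
The maps `π (a, i) = a` and `χ (a, i) = a + φ i` are surjective ring homomorphisms
`E(R,I) → R`, and `i φ(j) = i j` makes `ker π · ker χ = 0`. Hence a prime ideal of `E(R,I)`
contains one of the two kernels, i.e. it is `π⁻¹ A` or `χ⁻¹ Z` for an ideal of `R`; primality
and maximality pass both ways along preimages under surjective homomorphisms. Finally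
`χ⁻¹ Z = {(a, -i) : a - φ(i) ∈ Z}`, and it equals `π⁻¹ Z` as soon as `φ(I) ⊆ Z`.
-/

namespace TwoSidedIdeal

variable {S T : Type*} [Ring S] [Ring T] {f : S →+* T}

lemma map_le_iff_le_comap {I : TwoSidedIdeal S} {A : TwoSidedIdeal T} :
    I.map f ≤ A ↔ I ≤ A.comap f := by
  rw [map, span_le, Set.image_subset_iff]
  exact ⟨fun h x hx => (mem_comap f).2 (h hx), fun h x hx => (mem_comap f).1 (h hx)⟩

lemma coe_map_of_surjective (hf : Function.Surjective f) (I : TwoSidedIdeal S) :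
    (I.map f : Set T) = f '' I := by
  refine subset_antisymm (fun y hy => ?_) subset_span
  induction hy using span_induction with
  | mem y hy => exact hy
  | zero => exact ⟨0, I.zero_mem, map_zero f⟩
  | add _ _ _ _ hx hy =>
    obtain ⟨x, hx, rfl⟩ := hx
    obtain ⟨y, hy, rfl⟩ := hy
    exact ⟨x + y, I.add_mem hx hy, map_add f x y⟩
  | neg _ _ hx =>
    obtain ⟨x, hx, rfl⟩ := hx
    exact ⟨-x, I.neg_mem hx, map_neg f x⟩
  | left_absorb a _ _ hx =>
    obtain ⟨x, hx, rfl⟩ := hx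
    obtain ⟨s, rfl⟩ := hf a
    exact ⟨s * x, I.mul_mem_left s x hx, map_mul f s x⟩
  | right_absorb b _ _ hx =>
    obtain ⟨x, hx, rfl⟩ := hx
    obtain ⟨s, rfl⟩ := hf b
    exact ⟨x * s, I.mul_mem_right x s hx, map_mul f x s⟩

lemma mem_map_of_surjective (hf : Function.Surjective f) {I : TwoSidedIdeal S} {y : T} :
    y ∈ I.map f ↔ ∃ x ∈ I, f x = y := by
  rw [← SetLike.mem_coe, coe_map_of_surjective hf]
  rfl

lemma comap_map_of_ker_le (hf : Function.Surjective f) {I : TwoSidedIdeal S}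
    (hI : ker f ≤ I) : (I.map f).comap f = I := by
  refine le_antisymm (fun x hx => ?_) (map_le_iff_le_comap.1 le_rfl)
  obtain ⟨y, hy, hyx⟩ := (mem_map_of_surjective hf).1 (mem_comap f |>.1 hx)
  have hxy : x - y ∈ I := hI <| (mem_ker f).2 <| by rw [map_sub, hyx, sub_self]
  simpa using I.add_mem hxy hy

lemma comap_le_comap_iff (hf : Function.Surjective f) {A B : TwoSidedIdeal T} :
    A.comap f ≤ B.comap f ↔ A ≤ B := by
  refine ⟨fun h y hy => ?_, comap_le_comap f⟩
  obtain ⟨x, rfl⟩ := hf y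
  exact (mem_comap f).1 (h ((mem_comap f).2 hy))

lemma comap_inj (hf : Function.Surjective f) {A B : TwoSidedIdeal T} :
    A.comap f = B.comap f ↔ A = B := by
  simp only [le_antisymm_iff, comap_le_comap_iff hf]

lemma comap_eq_top_iff {A : TwoSidedIdeal T} : A.comap f = ⊤ ↔ A = ⊤ := by
  rw [← one_mem_iff, ← one_mem_iff, mem_comap, map_one]

lemma ker_le_comap (A : TwoSidedIdeal T) : ker f ≤ A.comap f := fun x hx => by
  rw [mem_comap, (mem_ker f).1 hx]
  exact A.zero_mem

end TwoSidedIdeal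

open TwoSidedIdeal

section PrimeMaximal

variable {S T : Type*} [Ring S] [Ring T]

lemma TsiMaximal.tsiPrime {P : TwoSidedIdeal S} (hP : TsiMaximal P) : TsiPrime P := by
  have one_mem_sup : ∀ A : TwoSidedIdeal S, ¬ A ≤ P → ∃ p ∈ P, ∃ a ∈ A, p + a = 1 := by
    intro A hA
    rcases hP.2 (P ⊔ A) le_sup_left with h | h
    · exact absurd (h ▸ le_sup_right) hA
    · exact mem_sup.1 (by rw [h]; trivial)
  intro A B hAB
  by_contra! h
  obtain ⟨p, hp, a, ha, hpa⟩ := one_mem_sup A h.1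
  obtain ⟨q, hq, b, hb, hqb⟩ := one_mem_sup B h.2
  have : (p + a) * (q + b) ∈ P := by
    rw [add_mul, mul_add, mul_add]
    exact P.add_mem (P.add_mem (P.mul_mem_right _ _ hp) (P.mul_mem_right _ _ hp))
      (P.add_mem (P.mul_mem_left _ _ hq) (hAB a ha b hb))
  rw [hpa, hqb, one_mul] at this
  exact hP.1 (P.eq_top this)

variable {f : S →+* T}

lemma tsiPrime_comap_iff (hf : Function.Surjective f) {A : TwoSidedIdeal T} :
    TsiPrime (A.comap f) ↔ TsiPrime A := by
  constructor
  · intro hA B C hBC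
    have := hA (B.comap f) (C.comap f) fun x hx y hy => by
      rw [mem_comap, map_mul]
      exact hBC _ ((mem_comap f).1 hx) _ ((mem_comap f).1 hy)
    simpa only [comap_le_comap_iff hf] using this
  · intro hA B C hBC
    have := hA (B.map f) (C.map f) fun x hx y hy => by
      obtain ⟨x', hx', rfl⟩ := (mem_map_of_surjective hf).1 hx
      obtain ⟨y', hy', rfl⟩ := (mem_map_of_surjective hf).1 hy
      rw [← map_mul, ← mem_comap]
      exact hBC x' hx' y' hy'
    simpa only [map_le_iff_le_comap] using this

lemma tsiMaximal_comap_iff (hf : Function.Surjective f) {A : TwoSidedIdeal T} :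
    TsiMaximal (A.comap f) ↔ TsiMaximal A := by
  simp only [TsiMaximal, ne_eq, comap_eq_top_iff]
  refine and_congr_right fun _ => ⟨fun hA B hAB => ?_, fun hA Q hAQ => ?_⟩
  · simpa only [comap_inj hf, comap_eq_top_iff] using
      hA (B.comap f) ((comap_le_comap_iff hf).2 hAB)
  · have hker : ker f ≤ Q := (ker_le_comap A).trans hAQ
    have hAmap : A ≤ Q.map f := by
      rw [← comap_le_comap_iff hf, comap_map_of_ker_le hf hker]
      exact hAQ
    rcases hA (Q.map f) hAmap with h | h
    · left
      rw [← comap_map_of_ker_le hf hker, h]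
    · right
      rw [← comap_map_of_ker_le hf hker, h]
      exact comap_eq_top_iff.2 rfl

lemma TsiPrime.exists_eq_comap_or_exists_eq_comap {P : TwoSidedIdeal S} (hP : TsiPrime P)
    {g : S →+* T} (hf : Function.Surjective f) (hg : Function.Surjective g)
    (hfg : ∀ a ∈ ker f, ∀ b ∈ ker g, a * b = 0) :
    (∃ A : TwoSidedIdeal T, P = A.comap f) ∨ ∃ B : TwoSidedIdeal T, P = B.comap g := by
  refine (hP (ker f) (ker g) fun a ha b hb => ?_).imp
    (fun h => ⟨P.map f, (comap_map_of_ker_le hf h).symm⟩)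
    (fun h => ⟨P.map g, (comap_map_of_ker_le hg h).symm⟩)
  rw [hfg a ha b hb]
  exact P.zero_mem

end PrimeMaximal

section IsRHom

variable {R I : Type*} [Ring R] [NonUnitalRing I] [Module R I] [Module Rᵐᵒᵖ I] {φ : I → R}

lemma IsRHom.map_zero (hφ : IsRHom R φ) : φ 0 = 0 := by
  simpa using hφ.2.2.1 0 0

lemma IsRHom.map_neg (hφ : IsRHom R φ) (x : I) : φ (-x) = -φ x := by
  simpa using hφ.2.2.1 (-1) x

end IsRHom

namespace Dorroh

variable {R I : Type*} [Ring R] [NonUnitalRing I] [Module R I] [Module Rᵐᵒᵖ I] [IsRRng R I]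

variable (R I) in
def fstHom : Dorroh R I →+* R where
  toFun p := p.fst
  map_one' := rfl
  map_mul' _ _ := rfl
  map_zero' := rfl
  map_add' _ _ := rfl

lemma fstHom_apply (p : Dorroh R I) : fstHom R I p = p.fst := rfl

lemma fstHom_surjective : Function.Surjective (fstHom R I) := fun a => ⟨⟨a, 0⟩, rfl⟩

def lift {φ : I → R} (hφ : IsRHom R φ) : Dorroh R I →+* R where
  toFun p := p.fst + φ p.snd
  map_one' := by simp [hφ.map_zero]
  map_mul' p q := by
    obtain ⟨hadd, hmul, hsmul, hopsmul⟩ := hφ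
    simp only [mul_fst, mul_snd, hadd, hmul, hsmul, hopsmul]
    noncomm_ring
  map_zero' := by simp [hφ.map_zero]
  map_add' p q := by
    simp only [add_fst, add_snd, hφ.1]
    abel

variable {φ : I → R} (hφ : IsRHom R φ)

lemma lift_apply (p : Dorroh R I) : lift hφ p = p.fst + φ p.snd := rfl

lemma lift_surjective : Function.Surjective (lift hφ) := fun a =>
  ⟨⟨a, 0⟩, by rw [lift_apply, hφ.map_zero, add_zero]⟩

lemma coe_comap_fstHom (A : TwoSidedIdeal R) :
    (A.comap (fstHom R I) : Set (Dorroh R I)) = {p | p.fst ∈ A} :=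
  Set.ext fun _ => mem_comap _

lemma coe_comap_lift (Z : TwoSidedIdeal R) :
    (Z.comap (lift hφ) : Set (Dorroh R I)) = {p | p.fst - φ (-p.snd) ∈ Z} :=
  Set.ext fun p => by
    rw [SetLike.mem_coe, mem_comap, lift_apply, Set.mem_ofPred_eq, hφ.map_neg, sub_neg_eq_add]

lemma comap_lift_eq_comap_fstHom {Z : TwoSidedIdeal R} (hZ : ∀ i, φ i ∈ Z) :
    Z.comap (lift hφ) = Z.comap (fstHom R I) :=
  TwoSidedIdeal.ext fun p => by
    rw [mem_comap, mem_comap, lift_apply, fstHom_apply]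
    exact ⟨fun h => by simpa using Z.sub_mem h (hZ p.snd), fun h => Z.add_mem h (hZ p.snd)⟩

lemma mul_eq_zero_of_mem_ker (hφI : ∀ i j : I, op (φ j) • i = i * j)
    {a b : Dorroh R I} (ha : a ∈ ker (fstHom R I))
    (hb : b ∈ ker (lift hφ)) : a * b = 0 := by
  rw [mem_ker, fstHom_apply] at ha
  rw [mem_ker, lift_apply] at hb
  have hb : b.fst = -φ b.snd := eq_neg_of_add_eq_zero_left hb
  ext
  · simp [ha]
  · simp [ha, hb, hφI]

lemma iff_exists_eq_comap_fstHom_or_comap_lift (hφI : ∀ i j : I, op (φ j) • i = i * j)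
    {P : TwoSidedIdeal (Dorroh R I) → Prop} {Q : TwoSidedIdeal R → Prop}
    (hP : ∀ K, P K → TsiPrime K)
    (hPQ : ∀ f : Dorroh R I →+* R, Function.Surjective f → ∀ A, P (A.comap f) ↔ Q A)
    (K : TwoSidedIdeal (Dorroh R I)) :
    P K ↔ (∃ A, Q A ∧ K = A.comap (fstHom R I)) ∨
      ∃ Z, Q Z ∧ (¬ ∀ i, φ i ∈ Z) ∧ K = Z.comap (lift hφ) := by
  have hfst := hPQ _ fstHom_surjective
  have hlift := hPQ _ (lift_surjective hφ)
  constructor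
  · intro hK
    rcases (hP K hK).exists_eq_comap_or_exists_eq_comap fstHom_surjective
      (lift_surjective hφ) (fun a ha b hb => mul_eq_zero_of_mem_ker hφ hφI ha hb)
      with ⟨A, rfl⟩ | ⟨Z, rfl⟩
    · exact Or.inl ⟨A, (hfst A).1 hK, rfl⟩
    by_cases hZ : ∀ i, φ i ∈ Z
    · rw [comap_lift_eq_comap_fstHom hφ hZ] at hK ⊢
      exact Or.inl ⟨Z, (hfst Z).1 hK, rfl⟩
    · exact Or.inr ⟨Z, (hlift Z).1 hK, hZ, rfl⟩
  · rintro (⟨A, hA, rfl⟩ | ⟨Z, hZ, -, rfl⟩)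
    exacts [(hfst A).2 hA, (hlift Z).2 hZ]

end Dorroh

variable (R I : Type*) [Ring R] [NonUnitalRing I] [Module R I] [Module Rᵐᵒᵖ I] [IsRRng R I]

open MulOpposite


/-- If there is an `R`-homomorphism `φ : I → R` with `iφ(j) = ij = φ(i)j`, then an ideal
`K` of `E(R,I)` is prime (resp. maximal) iff `K = A ⊕ I` for a prime (resp. maximal)
ideal `A` of `R`, or `K = {(a,-i) : a - φ(i) ∈ Z}` for a prime (resp. maximal) ideal `Z`
of `R` with `φ(I) ⊄ Z`. -/
theorem dorroh_prime_maximal_ideals (φ : I → R) (hφ : IsRHom R φ)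
    (hcomp : ∀ i j : I, op (φ j) • i = i * j ∧ φ i • j = i * j)
    (K : TwoSidedIdeal (Dorroh R I)) :
    (TsiPrime K ↔
      ((∃ A : TwoSidedIdeal R, TsiPrime A ∧
          (K : Set (Dorroh R I)) = {p : Dorroh R I | p.fst ∈ A}) ∨
        (∃ Z : TwoSidedIdeal R, TsiPrime Z ∧ (¬ ∀ i : I, φ i ∈ Z) ∧
          (K : Set (Dorroh R I)) = {p : Dorroh R I | p.fst - φ (-p.snd) ∈ Z}))) ∧
    (TsiMaximal K ↔
      ((∃ A : TwoSidedIdeal R, TsiMaximal A ∧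
          (K : Set (Dorroh R I)) = {p : Dorroh R I | p.fst ∈ A}) ∨
        (∃ Z : TwoSidedIdeal R, TsiMaximal Z ∧ (¬ ∀ i : I, φ i ∈ Z) ∧
          (K : Set (Dorroh R I)) = {p : Dorroh R I | p.fst - φ (-p.snd) ∈ Z}))) := by
  simp only [← Dorroh.coe_comap_fstHom, ← Dorroh.coe_comap_lift hφ, SetLike.coe_set_eq]
  have hφI : ∀ i j : I, op (φ j) • i = i * j := fun i j => (hcomp i j).1
  exact ⟨Dorroh.iff_exists_eq_comap_fstHom_or_comap_lift hφ hφI (fun _ => id)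
      (fun _ hf _ => tsiPrime_comap_iff hf) K,
    Dorroh.iff_exists_eq_comap_fstHom_or_comap_lift hφ hφI (fun _ => TsiMaximal.tsiPrime)
      (fun _ hf _ => tsiMaximal_comap_iff hf) K⟩
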